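/- Let f : ℂ → ℂ be a nonconstant polynomial map, let δ > 0, and let μ be a δ-conformal measure for f. Let w ∈ ℂ be an expanding periodic point of f, i.e. f^p(w) = w and |(f^p)'(w)| > 1 for some p ≥ 1. Assume that no preimage of w is a critical point of f, i.e. f'(z) ≠ 0 for every z with f^n(z) = w for some n ≥ 0. Then the set of all preimages of w, namely {z ∈ ℂ : f^n(z) = w for some n ≥ 0}, has μ-measure zero. -/

import Mathlib

open MeasureTheory

/-- A `δ`-conformal measure for `f : ℂ → ℂ` is a Borel probability measure `μ` such that
`μ (f '' A) = ∫_A |f'(z)|^δ dμ(z)` for every Borel set `A` on which `f` is injective. -/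
def IsConformalMeasure (f : ℂ → ℂ) (δ : ℝ) (μ : Measure ℂ) : Prop :=
  IsProbabilityMeasure μ ∧
    ∀ A : Set ℂ, MeasurableSet A → Set.InjOn f A →
      μ (f '' A) = ∫⁻ z in A, ENNReal.ofReal (‖deriv f z‖ ^ δ) ∂μ

/-!
Applied to singletons, conformality says that `μ {f z} = |f'(z)|^δ μ {z}`, hence by the chain
rule `μ {w} = |(f^p)'(w)|^δ μ {w}` at a periodic point; the factor exceeds `1` and `μ {w}` is
finite, so `μ {w} = 0`. Stepping backwards along a preimage chain with nonvanishing derivative,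
every preimage of `w` is an atom of mass zero, and there are only countably many of them
because polynomial fibres are finite.
-/

theorem Set.Countable.preimage_of_countable_fibers {α β : Type*} {f : α → β} {s : Set β}
    (hs : s.Countable) (hf : ∀ y, (f ⁻¹' {y}).Countable) : (f ⁻¹' s).Countable := by
  rw [← Set.biUnion_of_singleton s, Set.preimage_iUnion₂]
  exact hs.biUnion fun y _ => hf y

theorem Set.countable_setOf_exists_iterate_eq {α : Type*} {f : α → α}
    (hf : ∀ y, (f ⁻¹' {y}).Countable) (w : α) : {z | ∃ n, f^[n] z = w}.Countable := by
  have hiter : ∀ n, (f^[n] ⁻¹' {w}).Countable := by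
    intro n
    induction n with
    | zero => exact Set.countable_singleton w
    | succ n ih =>
      rw [Function.iterate_succ, Set.preimage_comp]
      exact ih.preimage_of_countable_fibers hf
  rw [Set.ofPred_exists]
  exact Set.countable_iUnion hiter

theorem Polynomial.finite_preimage_singleton_eval {R : Type*} [CommRing R] [IsDomain R]
    {P : Polynomial R} (hP : 0 < P.degree) (w : R) :
    ((fun z => P.eval z) ⁻¹' {w}).Finite := by
  have hne : P - Polynomial.C w ≠ 0 := fun h =>
    Polynomial.degree_C_le.not_gt (sub_eq_zero.mp h ▸ hP)
  refine (Polynomial.finite_setOfPred_isRoot hne).subset fun z hz => ?_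
  simpa only [Set.mem_preimage, Set.mem_singleton_iff, Set.mem_ofPred_eq, Polynomial.IsRoot.def,
    Polynomial.eval_sub, Polynomial.eval_C, sub_eq_zero] using hz

namespace IsConformalMeasure

variable {f : ℂ → ℂ} {δ : ℝ} {μ : Measure ℂ}

theorem measure_singleton_image (hμ : IsConformalMeasure f δ μ) (z : ℂ) :
    μ {f z} = ENNReal.ofReal (‖deriv f z‖ ^ δ) * μ {z} := by
  have h := hμ.2 {z} (measurableSet_singleton z) (Set.subsingleton_singleton.injOn f)
  rwa [Set.image_singleton, lintegral_singleton] at h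

theorem measure_singleton_iterate (hμ : IsConformalMeasure f δ μ) (hf : Differentiable ℂ f)
    (n : ℕ) (z : ℂ) :
    μ {f^[n] z} = ENNReal.ofReal (‖deriv f^[n] z‖ ^ δ) * μ {z} := by
  induction n with
  | zero => simp
  | succ n ih =>
    have hchain : deriv f^[n + 1] z = deriv f (f^[n] z) * deriv f^[n] z := by
      rw [Function.iterate_succ']
      exact deriv_comp z hf.differentiableAt (hf.iterate n).differentiableAt
    rw [Function.iterate_succ_apply', hμ.measure_singleton_image, ih, ← mul_assoc,
      ← ENNReal.ofReal_mul (by positivity), hchain, norm_mul,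
      Real.mul_rpow (norm_nonneg _) (norm_nonneg _)]

theorem measure_singleton_eq_zero_of_expanding (hμ : IsConformalMeasure f δ μ)
    (hf : Differentiable ℂ f) (hδ : 0 < δ) {w : ℂ} {p : ℕ} (hper : f^[p] w = w)
    (hexp : 1 < ‖deriv f^[p] w‖) : μ {w} = 0 := by
  have := hμ.1
  by_contra hw
  have hfix : 1 * μ {w} = ENNReal.ofReal (‖deriv f^[p] w‖ ^ δ) * μ {w} := by
    rw [one_mul, ← hμ.measure_singleton_iterate hf, hper]
  have hone := (ENNReal.mul_left_inj hw (measure_ne_top μ _)).mp hfix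
  have hgt : (1 : ℝ) < ‖deriv f^[p] w‖ ^ δ := Real.one_lt_rpow hexp hδ
  rw [eq_comm, ENNReal.ofReal_eq_one] at hone
  exact hgt.ne' hone

theorem measure_singleton_eq_zero_of_image (hμ : IsConformalMeasure f δ μ) {z : ℂ}
    (hz : deriv f z ≠ 0) (h : μ {f z} = 0) : μ {z} = 0 := by
  rw [hμ.measure_singleton_image] at h
  have hfactor : 0 < ENNReal.ofReal (‖deriv f z‖ ^ δ) :=
    ENNReal.ofReal_pos.mpr (Real.rpow_pos_of_pos (norm_pos_iff.mpr hz) δ)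
  exact (mul_eq_zero.mp h).resolve_left hfactor.ne'

theorem measure_singleton_eq_zero_of_iterate_eq (hμ : IsConformalMeasure f δ μ) {w : ℂ}
    (hw : μ {w} = 0) (hcrit : ∀ z : ℂ, (∃ n : ℕ, f^[n] z = w) → deriv f z ≠ 0) {n : ℕ}
    {z : ℂ} (hz : f^[n] z = w) : μ {z} = 0 := by
  induction n generalizing z with
  | zero => rwa [← hz] at hw
  | succ n ih => exact hμ.measure_singleton_eq_zero_of_image (hcrit z ⟨n + 1, hz⟩) (ih hz)

end IsConformalMeasure

theorem preimages_of_expanding_periodic_point_null_general (f : ℂ → ℂ)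
    (hpoly : ∃ P : Polynomial ℂ, 0 < P.degree ∧ ∀ z, f z = P.eval z)
    (δ : ℝ) (hδ : 0 < δ) (μ : Measure ℂ) (hμ : IsConformalMeasure f δ μ)
    (w : ℂ) (p : ℕ) (hper : f^[p] w = w)
    (hexp : 1 < ‖deriv (f^[p]) w‖)
    (hcrit : ∀ z : ℂ, (∃ n : ℕ, f^[n] z = w) → deriv f z ≠ 0) :
    μ {z : ℂ | ∃ n : ℕ, f^[n] z = w} = 0 := by
  obtain ⟨P, hPdeg, hPf⟩ := hpoly
  obtain rfl : f = fun z => P.eval z := funext hPf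
  have hw : μ {w} = 0 :=
    hμ.measure_singleton_eq_zero_of_expanding P.differentiable hδ hper hexp
  have hcount : {z | ∃ n, (fun z => P.eval z)^[n] z = w}.Countable :=
    Set.countable_setOf_exists_iterate_eq
      (fun y => (P.finite_preimage_singleton_eval hPdeg y).countable) w
  rw [measure_null_iff_singleton hcount]
  rintro z ⟨n, hz⟩
  exact hμ.measure_singleton_eq_zero_of_iterate_eq hw hcrit hz

/-- For a nonconstant polynomial `f`, the set of all preimages of an expanding periodic
point `w` (none of whose preimages is a critical point) has zero `δ`-conformal measure. -/
theorem preimages_of_expanding_periodic_point_null (f : ℂ → ℂ)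
    (hpoly : ∃ P : Polynomial ℂ, 0 < P.degree ∧ ∀ z, f z = P.eval z)
    (δ : ℝ) (hδ : 0 < δ) (μ : Measure ℂ) (hμ : IsConformalMeasure f δ μ)
    (w : ℂ) (p : ℕ) (hp : 1 ≤ p) (hper : f^[p] w = w)
    (hexp : 1 < ‖deriv (f^[p]) w‖)
    (hcrit : ∀ z : ℂ, (∃ n : ℕ, f^[n] z = w) → deriv f z ≠ 0) :
    μ {z : ℂ | ∃ n : ℕ, f^[n] z = w} = 0 :=
  preimages_of_expanding_periodic_point_null_general f hpoly δ hδ μ hμ w p hper hexp hcrit
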